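/- arXiv:1801.07898 — 2 statements merged into one kernel-verified Lean document; each statement's English description precedes it below -/
import Mathlib

section
/- Let A be the matrix-model algebra determined by k, r_1, …, r_K and S. Then the left ideals of A contained in J(A) are in bijection with the K-tuples (V_1, …, V_K) of k-linear subspaces with V_i ⊆ 𝕍_i for each i. Explicitly, to each such tuple assign the set L of all elements M of J(A) such that, for every row index (i, t), the vector in k^n of x-coefficients of the (i, t)-th row of M lies in V_i; then L is a left ideal of A contained in J(A), and every left ideal of A contained in J(A) arises from exactly one tuple (V_1, …, V_K) in this way. -/
open scoped Matrix

/-- Row/column index set: pairs `(i, t)` with `1 ≤ i ≤ K`, `1 ≤ t ≤ rᵢ`. -/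
abbrev MIdx (K : ℕ) (r : Fin K → ℕ) : Type := Σ i : Fin K, Fin (r i)

/-- The matrix-model algebra determined by `k`, `r₁, …, r_K` and `S`: the `k`-subalgebra of
`M_n(k[x]/(x²))` of matrices whose `((i,t),(j,s))` entry has zero constant term whenever
`i ≠ j` and zero `x`-coefficient whenever `(i, j) ∉ S`. -/
def ModelAlgebra (k : Type) [Field k] (K : ℕ) (r : Fin K → ℕ)
    (S : Set (Fin K × Fin K)) :
    Subalgebra k (Matrix (MIdx K r) (MIdx K r) (DualNumber k)) where
  carrier := {M | ∀ p q : MIdx K r,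
    (p.1 ≠ q.1 → (M p q).fst = 0) ∧ ((p.1, q.1) ∉ S → (M p q).snd = 0)}
  add_mem' := by
    intro M N hM hN p q
    refine ⟨fun h => ?_, fun h => ?_⟩
    · simp [Matrix.add_apply, (hM p q).1 h, (hN p q).1 h]
    · simp [Matrix.add_apply, (hM p q).2 h, (hN p q).2 h]
  mul_mem' := by
    intro M N hM hN p q
    constructor
    · intro h
      rw [Matrix.mul_apply, TrivSqZeroExt.fst_sum]
      refine Finset.sum_eq_zero fun x _ => ?_
      rw [TrivSqZeroExt.fst_mul]
      by_cases hx : p.1 = x.1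
      · rw [(hN x q).1 (hx ▸ h), mul_zero]
      · rw [(hM p x).1 hx, zero_mul]
    · intro h
      rw [Matrix.mul_apply, TrivSqZeroExt.snd_sum]
      refine Finset.sum_eq_zero fun x _ => ?_
      rw [TrivSqZeroExt.snd_mul]
      by_cases hx : p.1 = x.1
      · have h1 : (N x q).snd = 0 := (hN x q).2 (by rw [← hx]; exact h)
        by_cases hx2 : x.1 = q.1
        · have h2 : (M p x).snd = 0 := (hM p x).2 (by rw [hx, hx2] at h ⊢; exact h)
          simp [h1, h2]
        · have h2 : (N x q).fst = 0 := (hN x q).1 hx2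
          simp [h1, h2]
      · have h1 : (M p x).fst = 0 := (hM p x).1 hx
        by_cases hx2 : x.1 = q.1
        · have h2 : (M p x).snd = 0 := (hM p x).2 (by rw [hx2]; exact h)
          simp [h1, h2]
        · have h2 : (N x q).fst = 0 := (hN x q).1 hx2
          simp [h1, h2]
  algebraMap_mem' := by
    intro c p q
    rw [Matrix.algebraMap_matrix_apply]
    by_cases hpq : p = q
    · subst hpq
      refine ⟨fun h => absurd rfl h, fun _ => ?_⟩
      rw [if_pos rfl]
      rfl
    · refine ⟨fun h => ?_, fun h => ?_⟩ <;> simp [hpq]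

/-- The subspace `𝕍ᵢ = { v ∈ kⁿ : v_{(j,s)} = 0 whenever (i,j) ∉ S }`. -/
def Vspace (k : Type) [Field k] (K : ℕ) (r : Fin K → ℕ) (S : Set (Fin K × Fin K))
    (i : Fin K) : Submodule k (MIdx K r → k) where
  carrier := {v | ∀ q : MIdx K r, (i, q.1) ∉ S → v q = 0}
  add_mem' := by intro a b ha hb q hq; simp [ha q hq, hb q hq]
  zero_mem' := by intro q hq; rfl
  smul_mem' := by intro c a ha q hq; simp [ha q hq]

/-- The set of elements of `J(A)` all of whose rows have their vector of `x`-coefficients in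
the corresponding subspace of the tuple `V`. -/
def TupleSet (k : Type) [Field k] (K : ℕ) (r : Fin K → ℕ) (S : Set (Fin K × Fin K))
    (V : Fin K → Submodule k (MIdx K r → k)) : Set ↥(ModelAlgebra k K r S) :=
  {m | m ∈ (⊥ : Ideal ↥(ModelAlgebra k K r S)).jacobson ∧
    ∀ p : MIdx K r,
      (fun q => ((m : Matrix (MIdx K r) (MIdx K r) (DualNumber k)) p q).snd) ∈ V p.1}

/-!
The Jacobson radical `J(A)` consists exactly of the elements with vanishing constant terms.
Such elements multiply to zero, so `1 + y m` is invertible for every `y`. Conversely, if some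
constant term `m_{pq}` were nonzero (necessarily with `p`, `q` in one block), then for a suitable
multiple `y` of the matrix unit `E_{qp}` the constant terms of column `q` of `y m + 1` vanish,
and no left invertible element has such a column.

On `J(A)`, left multiplication by `a ∈ A` replaces each row of `x`-coefficients by a `k`-linear
combination, with the constant terms of `a` as coefficients, of the rows of the same block, and
the matrix units `E_{pp'}` move a row anywhere inside its block. Hence a left ideal `L ⊆ J(A)`
is recovered from the spaces `Vᵢ` of `x`-coefficient rows of its elements at a fixed row of each
block, and conversely every tuple `Vᵢ ⊆ 𝕍ᵢ` is recovered from its ideal by looking at the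
elements with a single nonzero row.
-/

open Matrix TrivSqZeroExt

theorem Ideal.mem_jacobson_bot_iff_forall_exists_mul_eq_one {R : Type*} [Ring R] {x : R} :
    x ∈ (⊥ : Ideal R).jacobson ↔ ∀ y, ∃ z, z * (y * x + 1) = 1 := by
  simp only [Ideal.mem_jacobson_iff, Ideal.mem_bot, sub_eq_zero, mul_add, mul_one, mul_assoc]

namespace Matrix

variable {l m n R : Type*} [Fintype m] [CommSemiring R]

theorem fst_mul_apply (M : Matrix l m (DualNumber R)) (N : Matrix m n (DualNumber R)) (i : l)
    (j : n) : ((M * N) i j).fst = ∑ x, (M i x).fst * (N x j).fst := by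
  simp [mul_apply, fst_sum]

theorem snd_mul_apply (M : Matrix l m (DualNumber R)) (N : Matrix m n (DualNumber R)) (i : l)
    (j : n) :
    ((M * N) i j).snd = ∑ x, ((M i x).fst * (N x j).snd + (M i x).snd * (N x j).fst) := by
  simp [mul_apply, snd_sum, mul_comm]

end Matrix

namespace ModelAlgebra

variable {k : Type} [Field k] {K : ℕ} {r : Fin K → ℕ} {S : Set (Fin K × Fin K)}

local notation "𝒜" => ModelAlgebra k K r S

theorem fst_eq_zero_of_ne (m : 𝒜) {p q : MIdx K r} (h : p.1 ≠ q.1) : (m.1 p q).fst = 0 :=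
  (m.2 p q).1 h

theorem snd_eq_zero_of_notMem (m : 𝒜) {p q : MIdx K r} (h : (p.1, q.1) ∉ S) :
    (m.1 p q).snd = 0 :=
  (m.2 p q).2 h

theorem fst_mul_eq_zero (a : 𝒜) {m : 𝒜} (hm : ∀ p q, (m.1 p q).fst = 0) (p q : MIdx K r) :
    ((a * m).1 p q).fst = 0 := by
  simp [fst_mul_apply, hm]

theorem mul_eq_zero_of_fst_eq_zero {a m : 𝒜} (ha : ∀ p q, (a.1 p q).fst = 0)
    (hm : ∀ p q, (m.1 p q).fst = 0) : a * m = 0 := by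
  ext p q
  · exact fst_mul_eq_zero a hm p q
  · simp [snd_mul_apply, ha, hm]

def matrixUnit (i j : MIdx K r) (h : i.1 = j.1) : 𝒜 :=
  ⟨single i j 1, fun p q => by
    by_cases hpq : i = p ∧ j = q
    · obtain ⟨rfl, rfl⟩ := hpq
      simp [h]
    · simp [hpq]⟩

theorem matrixUnit_mul_apply (i j : MIdx K r) (h : i.1 = j.1) (m : 𝒜) (p q : MIdx K r) :
    (matrixUnit i j h * m).1 p q = if p = i then m.1 j q else 0 := by
  split_ifs with hp
  · subst hp
    exact (single_mul_apply_same _ _ _ _ _).trans (one_mul _)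
  · exact single_mul_apply_of_ne _ _ _ _ _ hp _

theorem mem_jacobson_bot_iff {m : 𝒜} :
    m ∈ (⊥ : Ideal 𝒜).jacobson ↔ ∀ p q, (m.1 p q).fst = 0 := by
  rw [Ideal.mem_jacobson_bot_iff_forall_exists_mul_eq_one]
  constructor
  · intro hm p q
    by_cases hpq : p.1 = q.1
    swap
    · exact fst_eq_zero_of_ne m hpq
    by_contra hc
    obtain ⟨z, hz⟩ := hm (-(m.1 p q).fst⁻¹ • matrixUnit q p hpq.symm)
    set u := -(m.1 p q).fst⁻¹ • matrixUnit q p hpq.symm * m + 1 with hu_def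
    have hu : ∀ x, (u.1 x q).fst = 0 := by
      intro x
      rw [hu_def, smul_mul_assoc]
      simp only [Subalgebra.coe_add, Subalgebra.coe_smul, Subalgebra.coe_one, Matrix.add_apply,
        Matrix.smul_apply, matrixUnit_mul_apply, one_apply]
      split_ifs with hx
      · simp [hc]
      · simp
    -- the column `q` of constant terms of `u` vanishes, so `u` cannot be left invertible
    have h1 := congrArg (fun a : 𝒜 => (a.1 q q).fst) hz
    simp [fst_mul_apply, hu] at h1
  · intro hm y
    refine ⟨1 - y * m, ?_⟩
    have hsq : y * m * (y * m) = 0 :=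
      mul_eq_zero_of_fst_eq_zero (fst_mul_eq_zero y hm) (fst_mul_eq_zero y hm)
    rw [sub_mul, one_mul, mul_add, mul_one, hsq, zero_add, add_sub_cancel_left]

def rowSnd (p : MIdx K r) : 𝒜 →ₗ[k] MIdx K r → k where
  toFun m q := (m.1 p q).snd
  map_add' _ _ := rfl
  map_smul' _ _ := rfl

@[simp]
theorem rowSnd_apply (p : MIdx K r) (m : 𝒜) (q : MIdx K r) : rowSnd p m q = (m.1 p q).snd :=
  rfl

theorem mem_tupleSet {V : Fin K → Submodule k (MIdx K r → k)} {m : 𝒜} :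
    m ∈ TupleSet k K r S V ↔ m ∈ (⊥ : Ideal 𝒜).jacobson ∧ ∀ p, rowSnd p m ∈ V p.1 :=
  Iff.rfl

theorem rowSnd_mem_vspace (m : 𝒜) (p : MIdx K r) : rowSnd p m ∈ Vspace k K r S p.1 :=
  fun _ => snd_eq_zero_of_notMem m

theorem rowSnd_mul {a m : 𝒜} (hm : ∀ p q, (m.1 p q).fst = 0) (p : MIdx K r) :
    rowSnd p (a * m) = ∑ x, (a.1 p x).fst • rowSnd x m := by
  ext q
  simp [snd_mul_apply, hm]

theorem rowSnd_matrixUnit_mul (i j : MIdx K r) (h : i.1 = j.1) (m : 𝒜) :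
    rowSnd i (matrixUnit i j h * m) = rowSnd j m := by
  ext q
  simp [matrixUnit_mul_apply]

def tupleIdeal (V : Fin K → Submodule k (MIdx K r → k)) : Ideal 𝒜 where
  carrier := TupleSet k K r S V
  zero_mem' := mem_tupleSet.2 ⟨zero_mem _, fun p => by simp⟩
  add_mem' ha hb := mem_tupleSet.2 ⟨add_mem ha.1 hb.1, fun p => by
    rw [map_add]; exact add_mem (ha.2 p) (hb.2 p)⟩
  smul_mem' a m hm := by
    refine mem_tupleSet.2 ⟨Ideal.mul_mem_left _ a hm.1, fun p => ?_⟩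
    rw [smul_eq_mul, rowSnd_mul (mem_jacobson_bot_iff.1 hm.1)]
    refine sum_mem fun x _ => ?_
    by_cases hx : p.1 = x.1
    · exact hx ▸ (V x.1).smul_mem _ (hm.2 x)
    · rw [fst_eq_zero_of_ne a hx, zero_smul]
      exact zero_mem _

def xRow (p : MIdx K r) {v : MIdx K r → k} (hv : v ∈ Vspace k K r S p.1) : 𝒜 :=
  ⟨of fun s q => inr ((Pi.single p v : MIdx K r → MIdx K r → k) s q), fun s q => by
    refine ⟨fun _ => fst_inr _ _, fun hsq => ?_⟩
    by_cases hs : s = p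
    · subst hs
      simpa using hv q hsq
    · simp [hs]⟩

theorem rowSnd_xRow (p s : MIdx K r) {v : MIdx K r → k} (hv : v ∈ Vspace k K r S p.1) :
    rowSnd s (xRow p hv) = (Pi.single p v : MIdx K r → MIdx K r → k) s :=
  rfl

theorem xRow_mem_tupleIdeal {V : Fin K → Submodule k (MIdx K r → k)} (p : MIdx K r)
    {v : MIdx K r → k} (hv : v ∈ Vspace k K r S p.1) (hvV : v ∈ V p.1) :
    xRow p hv ∈ tupleIdeal V := by
  refine mem_tupleSet.2 ⟨mem_jacobson_bot_iff.2 fun _ _ => fst_inr _ _, fun s => ?_⟩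
  rw [rowSnd_xRow]
  by_cases hs : s = p
  · subst hs
    simpa using hvV
  · simp [hs]

def rowSpace (L : Ideal 𝒜) (p : MIdx K r) : Submodule k (MIdx K r → k) :=
  (L.restrictScalars k).map (rowSnd p)

theorem rowSpace_le_vspace (L : Ideal 𝒜) (p : MIdx K r) : rowSpace L p ≤ Vspace k K r S p.1 := by
  rintro _ ⟨m, -, rfl⟩
  exact rowSnd_mem_vspace m p

theorem rowSpace_le_of_fst_eq (L : Ideal 𝒜) {i j : MIdx K r} (h : i.1 = j.1) :
    rowSpace L j ≤ rowSpace L i := by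
  rintro _ ⟨m, hm, rfl⟩
  exact ⟨matrixUnit i j h * m, L.mul_mem_left _ hm, rowSnd_matrixUnit_mul i j h m⟩

theorem rowSpace_eq_of_fst_eq (L : Ideal 𝒜) {i j : MIdx K r} (h : i.1 = j.1) :
    rowSpace L i = rowSpace L j :=
  (rowSpace_le_of_fst_eq L h.symm).antisymm (rowSpace_le_of_fst_eq L h)

theorem rowSpace_tupleIdeal {V : Fin K → Submodule k (MIdx K r → k)}
    (hV : ∀ i, V i ≤ Vspace k K r S i) (p : MIdx K r) :
    rowSpace (tupleIdeal (S := S) V) p = V p.1 := by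
  refine le_antisymm ?_ fun v hv => ?_
  · rintro _ ⟨m, hm, rfl⟩
    exact hm.2 p
  · exact ⟨xRow p (hV _ hv), xRow_mem_tupleIdeal p _ hv, by simp [rowSnd_xRow]⟩

theorem eq_sum_matrixUnit_mul {m : 𝒜} (hm : ∀ p q, (m.1 p q).fst = 0) (l : MIdx K r → 𝒜)
    (hl : ∀ p q, ((l p).1 p q).fst = 0) (h : ∀ p, rowSnd p (l p) = rowSnd p m) :
    m = ∑ p, matrixUnit p p rfl * l p := by
  ext s q
  all_goals simp only [AddSubmonoidClass.coe_finsetSum, Matrix.sum_apply, matrixUnit_mul_apply,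
    Finset.sum_ite_eq, Finset.mem_univ, if_true]
  · rw [hm, hl]
  · exact (congrFun (h s) q).symm

theorem coe_eq_tupleSet_rowSpace {L : Ideal 𝒜} (hL : L ≤ (⊥ : Ideal 𝒜).jacobson)
    {V : Fin K → Submodule k (MIdx K r → k)} (hV : ∀ p : MIdx K r, V p.1 = rowSpace L p) :
    (L : Set 𝒜) = TupleSet k K r S V := by
  refine Set.Subset.antisymm (fun m hm => ⟨hL hm, fun p => ?_⟩) fun m hm => ?_
  · exact hV p ▸ Submodule.mem_map_of_mem hm
  · have hrow (p : MIdx K r) : ∃ l ∈ L, rowSnd p l = rowSnd p m := by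
      have hp := hm.2 p
      rwa [hV p] at hp
    choose l hlL hl using hrow
    rw [eq_sum_matrixUnit_mul (mem_jacobson_bot_iff.1 hm.1) l
      (fun p => mem_jacobson_bot_iff.1 (hL (hlL p)) p) hl]
    exact sum_mem fun p _ => L.mul_mem_left _ (hlL p)

end ModelAlgebra

open ModelAlgebra

/-- the left ideals of the matrix-model algebra `A` contained in `J(A)` are in
bijection with tuples `(V₁, …, V_K)` of subspaces `Vᵢ ⊆ 𝕍ᵢ`: each tuple yields the left ideal
of all `M ∈ J(A)` whose `(i,t)`-th row of `x`-coefficients lies in `Vᵢ`, and every left ideal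
contained in `J(A)` arises from exactly one tuple. -/
theorem leftIdeals_in_radical_biject_with_tuples
    (k : Type) [Field k] (K : ℕ) (r : Fin K → ℕ) (hr : ∀ i, 0 < r i)
    (S : Set (Fin K × Fin K)) :
    (∀ V : Fin K → Submodule k (MIdx K r → k), (∀ i, V i ≤ Vspace k K r S i) →
      ∃ L : Ideal ↥(ModelAlgebra k K r S),
        L ≤ (⊥ : Ideal ↥(ModelAlgebra k K r S)).jacobson ∧
        (L : Set ↥(ModelAlgebra k K r S)) = TupleSet k K r S V) ∧
    (∀ L : Ideal ↥(ModelAlgebra k K r S),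
      L ≤ (⊥ : Ideal ↥(ModelAlgebra k K r S)).jacobson →
      ∃! V : {V : Fin K → Submodule k (MIdx K r → k) // ∀ i, V i ≤ Vspace k K r S i},
        (L : Set ↥(ModelAlgebra k K r S)) = TupleSet k K r S V.1) := by
  refine ⟨fun V _ => ⟨tupleIdeal V, fun _ hm => hm.1, rfl⟩, fun L hL => ?_⟩
  let p₀ (i : Fin K) : MIdx K r := ⟨i, ⟨0, hr i⟩⟩
  have hV (p : MIdx K r) : rowSpace L (p₀ p.1) = rowSpace L p := rowSpace_eq_of_fst_eq L rfl
  refine ⟨⟨fun i => rowSpace L (p₀ i), fun i => rowSpace_le_vspace L (p₀ i)⟩,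
    coe_eq_tupleSet_rowSpace hL hV, ?_⟩
  rintro ⟨V, hVS⟩ hLV
  have hL_eq : L = tupleIdeal V := SetLike.coe_injective hLV
  refine Subtype.ext <| funext fun i => ?_
  change V i = rowSpace L (p₀ i)
  rw [← rowSpace_tupleIdeal hVS (p₀ i), hL_eq]
end

section
/- Let k be a field and Q a finite quiver with vertex set {1, …, m}. Let d, d' ∈ ℕ^m be dimension vectors with d' ≤ d coordinatewise. If the set of G(d')-orbits on 𝔸_Q(d') is infinite, then the set of G(d)-orbits on 𝔸_Q(d) is infinite. -/
/-!
Zero-padding `x ↦ x ⊕ 0` maps `G(d')`-orbits to `G(d)`-orbits, and it is injective on orbits.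
Indeed, if an invertible `N = [[A, B], [C, D]]` intertwines `x ⊕ 0` and `y ⊕ 0`, then
`y A = A x`, `y B = 0` and `C x = 0`, so `A + B M C` intertwines `x` and `y` for every choice of
`M`. Invertibility of `N` gives `ker A ∩ ker C = 0` and `im A + im B` is the whole space, and with
these one chooses `M` (vertex by vertex) making `A + B M C` invertible.
-/

open scoped Matrix

/-- The representation space `𝔸_Q(d)` of a quiver with vertex set `Fin m`, arrow set `E` and
source/target maps `src, tgt`, for the dimension vector `d`. -/
def RepSpace (k : Type) [Field k] {m : ℕ} {E : Type} (src tgt : E → Fin m)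
    (d : Fin m → ℕ) : Type :=
  ∀ a : E, Matrix (Fin (d (tgt a))) (Fin (d (src a))) k

/-- Two points of `𝔸_Q(d)` lie in the same `G(d)`-orbit, where
`G(d) = ∏ᵢ GL_{dᵢ}(k)` acts by `(g · x)_α = g_{tgt α} x_α g_{src α}⁻¹`. -/
def RepOrbitRel (k : Type) [Field k] {m : ℕ} {E : Type} (src tgt : E → Fin m)
    (d : Fin m → ℕ) (x y : RepSpace k src tgt d) : Prop :=
  ∃ g : ∀ i : Fin m, Matrix.GeneralLinearGroup (Fin (d i)) k,
    ∀ a : E, y a = ((g (tgt a) : Matrix (Fin (d (tgt a))) (Fin (d (tgt a))) k) * x a) *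
      (((g (src a))⁻¹ : Matrix.GeneralLinearGroup (Fin (d (src a))) k) :
        Matrix (Fin (d (src a))) (Fin (d (src a))) k)

theorem exists_le_isCompl_of_sup_eq_top {α : Type*} [Lattice α] [BoundedOrder α]
    [IsModularLattice α] [ComplementedLattice α] {a b : α} (h : a ⊔ b = ⊤) :
    ∃ c ≤ b, IsCompl a c := by
  obtain ⟨c, hdisj, hsup⟩ :=
    IsModularLattice.exists_disjoint_and_sup_eq (inf_le_right : a ⊓ b ≤ b)
  have hcb : c ≤ b := hsup ▸ le_sup_right
  refine ⟨c, hcb, ?_, ?_⟩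
  · rw [disjoint_iff, ← inf_eq_right.2 hcb, ← inf_assoc]
    exact hdisj.eq_bot
  · rw [codisjoint_iff, eq_top_iff, ← h, ← hsup, ← sup_assoc, sup_inf_self]

namespace LinearMap

variable {K V S : Type*} [Field K] [AddCommGroup V] [Module K V] [AddCommGroup S] [Module K S]

theorem exists_injective_add_comp_comp [FiniteDimensional K V]
    (a : V →ₗ[K] V) (b : S →ₗ[K] V) (c : V →ₗ[K] S)
    (hker : ker a ⊓ ker c = ⊥) (hrange : range a ⊔ range b = ⊤) :
    ∃ M : S →ₗ[K] S, Function.Injective (a + b ∘ₗ M ∘ₗ c) := by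
  obtain ⟨U, hUb, hU⟩ := exists_le_isCompl_of_sup_eq_top hrange
  have hdim : Module.finrank K (ker a) = Module.finrank K U := by
    have := a.finrank_range_add_finrank_ker
    have := Submodule.finrank_add_eq_of_isCompl hU
    omega
  let φ : ker a ≃ₗ[K] U := .ofFinrankEq _ _ hdim
  obtain ⟨τ, hτ⟩ := (c ∘ₗ (ker a).subtype).exists_leftInverse_of_injective <| by
    rw [ker_comp, ← Submodule.disjoint_iff_comap_eq_bot, disjoint_iff]; exact hker
  obtain ⟨ρ, hρ⟩ := Module.projective_lifting_property b.rangeRestrict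
    (Submodule.inclusion hUb) b.surjective_rangeRestrict
  have hbρ (u : U) : b (ρ u) = u := congr($hρ u)
  -- `M` sends `c v`, for `v ∈ ker a`, to a `b`-preimage of `φ v ∈ U`, a complement of `range a`.
  refine ⟨ρ ∘ₗ φ.toLinearMap ∘ₗ τ, (injective_iff_map_eq_zero _).2 fun v hv => ?_⟩
  have hav : a v = -(φ (τ (c v)) : V) := by
    rw [← hbρ]; exact eq_neg_of_add_eq_zero_left hv
  have hav0 : a v = 0 := by
    have : a v ∈ range a ⊓ U := ⟨mem_range_self a v, hav ▸ neg_mem (SetLike.coe_mem _)⟩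
    rwa [hU.inf_eq_bot] at this
  have hτ0 : τ (c v) = 0 := by
    simpa [hav0, eq_comm (a := (0 : V))] using hav
  have := congr($hτ ⟨v, hav0⟩)
  simpa [hτ0] using congr(Subtype.val $this.symm)

end LinearMap

namespace Matrix

variable {K n o : Type*} [Field K] [Fintype n] [DecidableEq n] [Fintype o] [DecidableEq o]

theorem exists_isUnit_add_mul_mul_of_isUnit_fromBlocks {A : Matrix n n K} {B : Matrix n o K}
    {C : Matrix o n K} {D : Matrix o o K} (h : IsUnit (fromBlocks A B C D)) :
    ∃ M : Matrix o o K, IsUnit (A + B * M * C) := by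
  obtain ⟨N, hright⟩ := h.exists_right_inv
  obtain ⟨N', hleft⟩ := h.exists_left_inv
  rw [← fromBlocks_toBlocks N, fromBlocks_multiply, ← fromBlocks_one, fromBlocks_inj] at hright
  rw [← fromBlocks_toBlocks N', fromBlocks_multiply, ← fromBlocks_one, fromBlocks_inj] at hleft
  have hker : LinearMap.ker (toLin' A) ⊓ LinearMap.ker (toLin' C) = ⊥ := by
    refine eq_bot_iff.2 fun v ⟨hAv, hCv⟩ => ?_
    rw [SetLike.mem_coe, LinearMap.mem_ker, toLin'_apply] at hAv hCv
    rw [Submodule.mem_bot, ← one_mulVec v, ← hleft.1, add_mulVec, ← mulVec_mulVec,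
      ← mulVec_mulVec, hAv, hCv, mulVec_zero, mulVec_zero, add_zero]
  have hrange : LinearMap.range (toLin' A) ⊔ LinearMap.range (toLin' B) = ⊤ := by
    refine eq_top_iff.2 fun v _ => ?_
    rw [← one_mulVec v, ← hright.1, add_mulVec, ← mulVec_mulVec, ← mulVec_mulVec]
    exact Submodule.add_mem_sup ⟨_, toLin'_apply _ _⟩ ⟨_, toLin'_apply _ _⟩
  obtain ⟨M, hM⟩ := (toLin' A).exists_injective_add_comp_comp _ _ hker hrange
  refine ⟨LinearMap.toMatrix' M, mulVec_injective_iff_isUnit.1 ?_⟩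
  change Function.Injective (toLin' _)
  rwa [map_add, toLin'_mul, toLin'_mul, toLin'_toMatrix', LinearMap.comp_assoc]

end Matrix

open Matrix

theorem exists_isUnit_intertwiner_of_fromBlocks {K ι E : Type*} [Field K] {src tgt : E → ι}
    {n o : ι → Type*} [∀ i, Fintype (n i)] [∀ i, DecidableEq (n i)] [∀ i, Fintype (o i)]
    [∀ i, DecidableEq (o i)] {x y : ∀ a, Matrix (n (tgt a)) (n (src a)) K}
    (N : ∀ i, Matrix (n i ⊕ o i) (n i ⊕ o i) K) (hN : ∀ i, IsUnit (N i))
    (hxy : ∀ a, fromBlocks (y a) 0 0 (0 : Matrix (o (tgt a)) (o (src a)) K) * N (src a) =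
      N (tgt a) * fromBlocks (x a) 0 0 (0 : Matrix (o (tgt a)) (o (src a)) K)) :
    ∃ g : ∀ i, Matrix (n i) (n i) K, (∀ i, IsUnit (g i)) ∧
      ∀ a, y a * g (src a) = g (tgt a) * x a := by
  have hN' i : IsUnit (fromBlocks (N i).toBlocks₁₁ (N i).toBlocks₁₂ (N i).toBlocks₂₁
      (N i).toBlocks₂₂) := (fromBlocks_toBlocks (N i)).symm ▸ hN i
  choose M hM using fun i => exists_isUnit_add_mul_mul_of_isUnit_fromBlocks (hN' i)
  refine ⟨_, hM, fun a => ?_⟩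
  have hblocks := hxy a
  rw [← fromBlocks_toBlocks (N (src a)), ← fromBlocks_toBlocks (N (tgt a)), fromBlocks_multiply,
    fromBlocks_multiply, fromBlocks_inj] at hblocks
  simp only [Matrix.mul_zero, Matrix.zero_mul, add_zero] at hblocks
  obtain ⟨hA, hB, hC, -⟩ := hblocks
  rw [Matrix.mul_add, Matrix.add_mul, hA, ← Matrix.mul_assoc, ← Matrix.mul_assoc, hB,
    Matrix.mul_assoc _ (N (tgt a)).toBlocks₂₁, ← hC]
  simp only [Matrix.zero_mul, Matrix.mul_zero]

def finSumFinSubEquiv {a b : ℕ} (h : a ≤ b) : Fin a ⊕ Fin (b - a) ≃ Fin b :=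
  finSumFinEquiv.trans (finCongr (Nat.add_sub_cancel' h))

section RepSpace

variable {k : Type} [Field k] {m : ℕ} {E : Type} {src tgt : E → Fin m} {d d' : Fin m → ℕ}

theorem repOrbitRel_iff_exists_isUnit {x y : RepSpace k src tgt d} :
    RepOrbitRel k src tgt d x y ↔ ∃ g : ∀ i, Matrix (Fin (d i)) (Fin (d i)) k,
      (∀ i, IsUnit (g i)) ∧ ∀ a, y a * g (src a) = g (tgt a) * x a := by
  constructor
  · rintro ⟨g, hg⟩
    refine ⟨fun i => g i, fun i => (g i).isUnit, fun a => ?_⟩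
    rw [hg a, Matrix.mul_assoc, Units.inv_mul, Matrix.mul_one]
  · rintro ⟨g, hg, hgxy⟩
    refine ⟨fun i => (hg i).unit, fun a => ?_⟩
    rw [IsUnit.unit_spec, ← hgxy, Matrix.mul_assoc, ← IsUnit.unit_spec (hg (src a)),
      Units.mul_inv, Matrix.mul_one]

theorem repOrbitRel_equivalence (src tgt : E → Fin m) (d : Fin m → ℕ) :
    Equivalence (RepOrbitRel k src tgt d) where
  refl x := ⟨1, fun a => by simp⟩
  symm := by
    rintro x y ⟨g, hg⟩
    refine ⟨g⁻¹, fun a => ?_⟩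
    simp only [hg a, Pi.inv_apply, inv_inv, Matrix.mul_assoc, Units.inv_mul, Matrix.mul_one]
    rw [← Matrix.mul_assoc, Units.inv_mul, Matrix.one_mul]
  trans := by
    rintro x y z ⟨g, hg⟩ ⟨g', hg'⟩
    refine ⟨g' * g, fun a => ?_⟩
    simp only [hg' a, hg a, Pi.mul_apply, _root_.mul_inv_rev, Units.val_mul, Matrix.mul_assoc]

variable (hle : ∀ i, d' i ≤ d i)

def padRep (x : RepSpace k src tgt d') : RepSpace k src tgt d := fun a =>
  (fromBlocks (x a) 0 0 0).submatrix (finSumFinSubEquiv (hle (tgt a))).symm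
    (finSumFinSubEquiv (hle (src a))).symm

theorem padRep_submatrix (x : RepSpace k src tgt d') (a : E) :
    (padRep hle x a).submatrix (finSumFinSubEquiv (hle (tgt a)))
      (finSumFinSubEquiv (hle (src a))) = fromBlocks (x a) 0 0 0 := by
  simp [padRep]

theorem repOrbitRel_padRep_iff {x y : RepSpace k src tgt d'} :
    RepOrbitRel k src tgt d (padRep hle x) (padRep hle y) ↔ RepOrbitRel k src tgt d' x y := by
  set σ := fun i => finSumFinSubEquiv (hle i)
  rw [repOrbitRel_iff_exists_isUnit, repOrbitRel_iff_exists_isUnit]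
  constructor
  · rintro ⟨G, hG, hGxy⟩
    refine exists_isUnit_intertwiner_of_fromBlocks (fun i => (G i).submatrix (σ i) (σ i))
      (fun i => (isUnit_submatrix_equiv _ _).2 (hG i)) fun a => ?_
    rw [← padRep_submatrix hle x, ← padRep_submatrix hle y, submatrix_mul_equiv,
      submatrix_mul_equiv, hGxy a]
  · rintro ⟨g, hg, hgxy⟩
    refine ⟨fun i => (fromBlocks (g i) 0 0 1).submatrix (σ i).symm (σ i).symm,
      fun i => (isUnit_submatrix_equiv _ _).2 (isUnit_fromBlocks_zero₂₁.2 ⟨hg i, isUnit_one⟩),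
      fun a => ?_⟩
    simp only [padRep, submatrix_mul_equiv, fromBlocks_multiply, hgxy a, Matrix.mul_zero,
      Matrix.zero_mul, Matrix.mul_one, add_zero, σ]

end RepSpace

theorem infinite_orbits_mono_general (k : Type) [Field k]
    {m : ℕ} {E : Type} (src tgt : E → Fin m) (d d' : Fin m → ℕ)
    (hle : ∀ i, d' i ≤ d i)
    (h : Infinite (Quot (RepOrbitRel k src tgt d'))) :
    Infinite (Quot (RepOrbitRel k src tgt d)) := by
  let pad : Quot (RepOrbitRel k src tgt d') → Quot (RepOrbitRel k src tgt d) :=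
    Quot.map (padRep hle) fun x y => (repOrbitRel_padRep_iff hle).2
  refine Infinite.of_injective pad ?_
  rintro ⟨x⟩ ⟨y⟩ hxy
  refine Quot.sound ((repOrbitRel_padRep_iff hle).1 ?_)
  exact (repOrbitRel_equivalence src tgt d).eqvGen_iff.1 (Quot.eqvGen_exact hxy)

/-- if `d' ≤ d` coordinatewise and the set of `G(d')`-orbits on `𝔸_Q(d')` is
infinite, then the set of `G(d)`-orbits on `𝔸_Q(d)` is infinite. -/
theorem infinite_orbits_mono (k : Type) [Field k]
    {m : ℕ} {E : Type} [Fintype E] (src tgt : E → Fin m) (d d' : Fin m → ℕ)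
    (hle : ∀ i, d' i ≤ d i)
    (h : Infinite (Quot (RepOrbitRel k src tgt d'))) :
    Infinite (Quot (RepOrbitRel k src tgt d)) :=
  infinite_orbits_mono_general k src tgt d d' hle h
end
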